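/- Let Q : Finset Θ → ℝ be monotone and submodular with Q(∅) = 0, k ≥ 1, and suppose the exact greedy sequence A_0 = ∅, A_{i+1} = A_i ∪ {argmax_θ (Q(A_i ∪ {θ}) − Q(A_i))} is used (ε = 0, argmax attained). Then for every l with 0 ≤ l ≤ k and every set A* with |A*| = k, Q(A_l) ≥ (1 − (1 − 1/k)^l)·Q(A*). -/
import Mathlib

lemma greedy_sub_aux {Θ : Type*} [DecidableEq Θ] (Q : Finset Θ → ℝ)
    (hsub : ∀ (A A' : Finset Θ) (θ : Θ),
      Q (A ∪ A' ∪ {θ}) - Q (A ∪ A') ≤ Q (A ∪ {θ}) - Q A)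
    (B : Finset Θ) : ∀ S : Finset Θ,
      Q (B ∪ S) - Q B ≤ ∑ θ ∈ S, (Q (B ∪ {θ}) - Q B) := by
  intro S
  induction S using Finset.induction_on with
  | empty => simp
  | @insert θ S hθ ih =>
    rw [Finset.sum_insert hθ]
    have h1 := hsub B S θ
    have : B ∪ insert θ S = B ∪ S ∪ {θ} := by
      ext x; simp [or_comm, or_assoc, or_left_comm]
    rw [this]
    linarith

/-- Exact greedy (ε = 0) guarantee: `Q(A_l) ≥ (1 − (1 − 1/k)^l)·Q(A*)`. -/
theorem stmt_12 {Θ : Type*} [DecidableEq Θ] [Fintype Θ] (Q : Finset Θ → ℝ)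
    (hmono : ∀ A B : Finset Θ, A ⊆ B → Q A ≤ Q B)
    (hsub : ∀ (A A' : Finset Θ) (θ : Θ),
      Q (A ∪ A' ∪ {θ}) - Q (A ∪ A') ≤ Q (A ∪ {θ}) - Q A)
    (hempty : Q ∅ = 0)
    (k : ℕ) (hk : 1 ≤ k)
    (A : ℕ → Finset Θ) (θseq : ℕ → Θ)
    (hA0 : A 0 = ∅) (hAsucc : ∀ i, A (i + 1) = insert (θseq (i + 1)) (A i))
    (hgreedy : ∀ i, ∀ θ : Θ,
      Q (insert θ (A i)) - Q (A i) ≤ Q (A (i + 1)) - Q (A i)) :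
    ∀ l ≤ k, ∀ Astar : Finset Θ, Astar.card = k →
      Q (A l) ≥ (1 - (1 - 1 / (k : ℝ)) ^ l) * Q Astar := by
  intro l _ Astar hcard
  have hk0 : (0 : ℝ) < (k : ℝ) := by exact_mod_cast hk.trans_lt' (by norm_num)
  have hfac : (0 : ℝ) ≤ 1 - 1 / (k : ℝ) := by
    rw [sub_nonneg, div_le_one hk0]; exact_mod_cast hk
  -- key: Q Astar - Q (A i) ≤ k * (Q (A (i+1)) - Q (A i))
  have key : ∀ i, Q Astar - Q (A i) ≤ (k : ℝ) * (Q (A (i + 1)) - Q (A i)) := by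
    intro i
    have h1 : Q Astar ≤ Q (A i ∪ Astar) := hmono _ _ (Finset.subset_union_right)
    have h2 := greedy_sub_aux Q hsub (A i) Astar
    have h3 : ∑ θ ∈ Astar, (Q (A i ∪ {θ}) - Q (A i)) ≤
        ∑ _θ ∈ Astar, (Q (A (i + 1)) - Q (A i)) := by
      apply Finset.sum_le_sum
      intro θ _
      have := hgreedy i θ
      have he : A i ∪ {θ} = insert θ (A i) := by
        ext x; simp [or_comm]
      rw [he]; linarith
    rw [Finset.sum_const, hcard, nsmul_eq_mul] at h3
    linarith
  -- induction: Q Astar - Q (A l) ≤ (1 - 1/k)^l * Q Astar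
  have main : ∀ l : ℕ, Q Astar - Q (A l) ≤ (1 - 1 / (k : ℝ)) ^ l * Q Astar := by
    intro l
    induction l with
    | zero => simp [hA0, hempty]
    | succ n ih =>
      have hkey := key n
      have hstep : Q Astar - Q (A (n + 1)) ≤ (1 - 1 / (k : ℝ)) * (Q Astar - Q (A n)) := by
        have : (1 : ℝ) / k * (Q Astar - Q (A n)) ≤ Q (A (n + 1)) - Q (A n) := by
          rw [div_mul_eq_mul_div, one_mul, div_le_iff₀ hk0]
          linarith [mul_comm ((k : ℝ)) (Q (A (n + 1)) - Q (A n))]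
        rw [sub_mul, one_mul]
        linarith
      calc Q Astar - Q (A (n + 1)) ≤ (1 - 1 / (k : ℝ)) * (Q Astar - Q (A n)) := hstep
        _ ≤ (1 - 1 / (k : ℝ)) * ((1 - 1 / (k : ℝ)) ^ n * Q Astar) :=
            mul_le_mul_of_nonneg_left ih hfac
        _ = (1 - 1 / (k : ℝ)) ^ (n + 1) * Q Astar := by ring
  have := main l
  linarith
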